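/- Fix n ≥ 1 and set b = ⌊log₂ n⌋ + 2. In (ℤ/2ℤ)[X₀, …, X_{b−1}], let I be the ideal generated by Xᵢ² − (2·Xᵢ + X_{i+1}) for 0 ≤ i ≤ b−2 together with X_{b−1}² (over ℤ/2ℤ these generators equal Xᵢ² − X_{i+1} and X_{b−1}²). If g is a multilinear polynomial (every exponent in every monomial of its support is at most 1) with (1 + X₀)ⁿ − g ∈ I, then the number of monomials in the support of g equals 2^{wt(n)}, where wt(n) is the number of ones in the binary expansion of n. Equivalently, lifting the coefficients of g to ℤ and evaluating at all variables equal to 1 yields the n-th term 𝒢ₙ = 2^{wt(n)} of Gould's sequence. -/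

import Mathlib

/-!
Substituting `Xᵢ ↦ Y ^ 2 ^ i` sends `Xᵢ² − 2Xᵢ − X_{i+1}` to `0` (in characteristic 2) and
`X_{b-1}²` to `Y ^ 2 ^ b`, so it maps `I` into `(Y ^ 2 ^ b)`. A multilinear monomial goes to
`Y ^ e`, where the exponent vector is the binary expansion of `e < 2 ^ b`; hence the substitution
preserves the number of monomials of `g` and keeps its degree below `2 ^ b`. As `n < 2 ^ b`, the
congruence `(1 + X₀)ⁿ ≡ g` becomes the equality `(1 + Y)ⁿ = g(Y, Y², Y⁴, …)`, and over `𝔽₂` the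
number of monomials of `(1 + Y)ⁿ` is `2 ^ wt(n)` because `(1 + Y) ^ (2m + r) = (1 + Y²)ᵐ (1 + Y)ʳ`.
-/

open MvPolynomial

/-- The generators of the ideal `I` over `ℤ/2ℤ`: `Xᵢ² − (2Xᵢ + X_{i+1})` for `i ≤ b-2`,
and `X_{b-1}²`. -/
noncomputable def gens (b : ℕ) : Fin b → MvPolynomial (Fin b) (ZMod 2) := fun i =>
  if h : (i : ℕ) + 1 < b then X i ^ 2 - (2 * X i + X ⟨(i : ℕ) + 1, h⟩) else X i ^ 2

namespace Polynomial

variable {R : Type*}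

section CommSemiring

variable [CommSemiring R]

theorem support_add_of_disjoint {p q : R[X]} (h : Disjoint p.support q.support) :
    (p + q).support = p.support ∪ q.support := by
  rw [← support_toFinsupp, toFinsupp_add, AddMonoidAlgebra.coeff_add, Finsupp.support_add_eq] <;>
    simp only [support_toFinsupp, h]

theorem support_mul_X (p : R[X]) : (p * X).support = p.support.image (· + 1) := by
  ext (_ | k)
  · simp
  · simp [coeff_mul_X]

theorem support_expand_two (q : R[X]) :
    (expand R 2 q).support = q.support.image (2 * ·) := by
  ext k
  simp only [mem_support_iff, Finset.mem_image]
  constructor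
  · intro hk
    rw [coeff_expand two_pos] at hk
    split_ifs at hk with h
    · exact ⟨k / 2, hk, Nat.mul_div_cancel' h⟩
    · exact absurd rfl hk
  · rintro ⟨j, hj, rfl⟩
    rwa [coeff_expand_mul' two_pos]

theorem card_support_expand_two (q : R[X]) :
    (expand R 2 q).support.card = q.support.card := by
  rw [support_expand_two, Finset.card_image_of_injective _ (fun a b h => by simpa using h)]

theorem card_support_expand_two_mul_one_add_X (q : R[X]) :
    (expand R 2 q * (1 + X)).support.card = 2 * q.support.card := by
  have hX : (expand R 2 q * X).support = q.support.image (2 * · + 1) := by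
    rw [support_mul_X, support_expand_two, Finset.image_image]; rfl
  have hdisj : Disjoint (expand R 2 q).support (expand R 2 q * X).support := by
    rw [hX, support_expand_two, Finset.disjoint_left]
    simp only [Finset.mem_image]
    rintro _ ⟨i, -, rfl⟩ ⟨j, -, h⟩
    omega
  rw [mul_one_add, support_add_of_disjoint hdisj, Finset.card_union_of_disjoint hdisj,
    card_support_expand_two, hX, Finset.card_image_of_injective _ (fun a b h => by simpa using h)]
  ring

theorem one_add_X_pow_two_mul [CharP R 2] (m : ℕ) :
    (1 + X : R[X]) ^ (2 * m) = expand R 2 ((1 + X) ^ m) := by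
  rw [pow_mul, add_pow_char, one_pow, map_pow, map_add, map_one, expand_X]

theorem card_support_one_add_X_pow [Nontrivial R] [CharP R 2] (n : ℕ) :
    ((1 + X : R[X]) ^ n).support.card = 2 ^ (Nat.digits 2 n).sum := by
  induction n using Nat.strong_induction_on with
  | _ n ih =>
    rcases n.eq_zero_or_pos with rfl | hn
    · rw [pow_zero, ← C_1, support_C one_ne_zero]; rfl
    have hsplit : (1 + X : R[X]) ^ n = expand R 2 ((1 + X) ^ (n / 2)) * (1 + X) ^ (n % 2) := by
      rw [← one_add_X_pow_two_mul, ← pow_add, Nat.div_add_mod]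
    rw [hsplit, Nat.digits_def' one_lt_two hn, List.sum_cons, pow_add, ← ih (n / 2) (by omega)]
    rcases Nat.mod_two_eq_zero_or_one n with h | h <;> rw [h]
    · rw [pow_zero, mul_one, pow_zero, one_mul, card_support_expand_two]
    · rw [pow_one, pow_one, card_support_expand_two_mul_one_add_X]

end CommSemiring

theorem degree_one_add_X_pow_lt [Semiring R] {n N : ℕ} (h : n < N) :
    ((1 + X : R[X]) ^ n).degree < N :=
  (degree_lt_iff_coeff_zero _ _).mpr fun k hk => by
    rw [coeff_one_add_X_pow, Nat.choose_eq_zero_of_lt (by omega), Nat.cast_zero]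

theorem eq_of_X_pow_dvd_sub [CommRing R] {p q : R[X]} {N : ℕ} (hp : p.degree < N)
    (hq : q.degree < N) (h : X ^ N ∣ p - q) : p = q := by
  ext d
  rw [← sub_eq_zero, ← coeff_sub]
  by_cases hd : d < N
  · exact X_pow_dvd_iff.mp h d hd
  · rw [not_lt] at hd
    rw [coeff_sub, (degree_lt_iff_coeff_zero _ _).mp hp d hd,
      (degree_lt_iff_coeff_zero _ _).mp hq d hd, sub_zero]

end Polynomial

namespace Finsupp

variable {σ : Type*}

theorem weight_eq_sum_support_of_le_one {M : Type*} [AddCommMonoid M] (w : σ → M)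
    {m : σ →₀ ℕ} (hm : ∀ i, m i ≤ 1) : weight w m = ∑ i ∈ m.support, w i := by
  rw [weight_apply, Finsupp.sum]
  refine Finset.sum_congr rfl fun i hi => ?_
  rw [show m i = 1 by have := hm i; rw [mem_support_iff] at hi; omega, one_smul]

theorem eq_of_support_eq_of_le_one {m m' : σ →₀ ℕ} (hm : ∀ i, m i ≤ 1)
    (hm' : ∀ i, m' i ≤ 1) (h : m.support = m'.support) : m = m' := by
  ext i
  have hi : i ∈ m.support ↔ i ∈ m'.support := by rw [h]
  simp only [mem_support_iff] at hi
  have := hm i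
  have := hm' i
  omega

theorem weight_two_pow_injOn (b : ℕ) :
    Set.InjOn (weight fun i : Fin b => 2 ^ (i : ℕ)) {m | ∀ i, m i ≤ 1} := by
  intro m (hm : ∀ i, m i ≤ 1) m' (hm' : ∀ i, m' i ≤ 1) h
  rw [weight_eq_sum_support_of_le_one _ hm, weight_eq_sum_support_of_le_one _ hm'] at h
  refine eq_of_support_eq_of_le_one hm hm' (Finset.map_injective Fin.valEmbedding ?_)
  exact Finset.geomSum_injective le_rfl (by simpa using h)

theorem weight_two_pow_lt {b : ℕ} {m : Fin b →₀ ℕ} (hm : ∀ i, m i ≤ 1) :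
    weight (fun i : Fin b => 2 ^ (i : ℕ)) m < 2 ^ b := by
  rw [weight_eq_sum_support_of_le_one _ hm]
  simpa using Nat.geomSum_lt le_rfl (s := m.support.map Fin.valEmbedding) (by simp)

end Finsupp

section WeightedSubstitution

variable {σ R : Type*} [CommSemiring R] (w : σ → ℕ)

theorem aeval_X_pow_monomial (m : σ →₀ ℕ) (c : R) :
    aeval (fun i => (Polynomial.X : Polynomial R) ^ w i) (monomial m c) =
      Polynomial.monomial (Finsupp.weight w m) c := by
  rw [aeval_monomial, Finsupp.prod, Polynomial.algebraMap_eq,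
    ← Polynomial.C_mul_X_pow_eq_monomial]
  simp only [← pow_mul, Finset.prod_pow_eq_pow_sum, Finsupp.weight_apply, Finsupp.sum,
    smul_eq_mul, mul_comm]

theorem coeff_aeval_X_pow (g : MvPolynomial σ R) (k : ℕ) :
    (aeval (fun i => (Polynomial.X : Polynomial R) ^ w i) g).coeff k =
      ∑ m ∈ g.support with Finsupp.weight w m = k, coeff m g := by
  conv_lhs => rw [g.as_sum]
  rw [map_sum, Polynomial.finsetSum_coeff, Finset.sum_filter]
  refine Finset.sum_congr rfl fun m _ => ?_
  rw [aeval_X_pow_monomial, Polynomial.coeff_monomial]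

theorem support_aeval_X_pow {g : MvPolynomial σ R}
    (hw : Set.InjOn (Finsupp.weight w) (g.support : Set (σ →₀ ℕ))) :
    (aeval (fun i => (Polynomial.X : Polynomial R) ^ w i) g).support =
      g.support.image (Finsupp.weight w) := by
  ext k
  simp only [Polynomial.mem_support_iff, coeff_aeval_X_pow, Finset.mem_image]
  constructor
  · intro hk
    obtain ⟨m, hm, -⟩ := Finset.exists_ne_zero_of_sum_ne_zero hk
    exact ⟨m, (Finset.mem_filter.mp hm).1, (Finset.mem_filter.mp hm).2⟩
  · rintro ⟨m, hm, rfl⟩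
    rw [Finset.sum_filter, Finset.sum_eq_single_of_mem m hm fun m' hm' hne =>
      if_neg fun h => hne (hw hm' hm h), if_pos rfl]
    exact mem_support_iff.mp hm

end WeightedSubstitution

noncomputable def twoPowSubst (b : ℕ) :
    MvPolynomial (Fin b) (ZMod 2) →ₐ[ZMod 2] Polynomial (ZMod 2) :=
  aeval fun i => Polynomial.X ^ 2 ^ (i : ℕ)

namespace twoPowSubst

variable {b : ℕ}

theorem X_pow_two_pow_dvd {p : MvPolynomial (Fin b) (ZMod 2)}
    (hp : p ∈ Ideal.span (Set.range (gens b))) : Polynomial.X ^ 2 ^ b ∣ twoPowSubst b p := by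
  have hmem := Ideal.mem_map_of_mem (twoPowSubst b) hp
  rw [Ideal.map_span] at hmem
  refine Ideal.mem_span_singleton.mp (Ideal.span_le.mpr ?_ hmem)
  rintro _ ⟨_, ⟨i, rfl⟩, rfl⟩
  rw [SetLike.mem_coe, Ideal.mem_span_singleton, gens]
  split_ifs with hi
  · simp [twoPowSubst, ← pow_mul, ← pow_succ, CharTwo.two_eq_zero]
  · rw [map_pow, twoPowSubst, aeval_X, ← pow_mul, ← pow_succ, show (i : ℕ) + 1 = b by omega]

variable {g : MvPolynomial (Fin b) (ZMod 2)}

theorem support_eq (hg : ∀ m ∈ g.support, ∀ i, m i ≤ 1) :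
    (twoPowSubst b g).support = g.support.image (Finsupp.weight fun i : Fin b => 2 ^ (i : ℕ)) :=
  support_aeval_X_pow _ ((Finsupp.weight_two_pow_injOn b).mono fun m hm => hg m hm)

theorem card_support (hg : ∀ m ∈ g.support, ∀ i, m i ≤ 1) :
    (twoPowSubst b g).support.card = g.support.card := by
  rw [support_eq hg,
    Finset.card_image_of_injOn ((Finsupp.weight_two_pow_injOn b).mono fun m hm => hg m hm)]

theorem degree_lt (hg : ∀ m ∈ g.support, ∀ i, m i ≤ 1) :
    (twoPowSubst b g).degree < (2 ^ b : ℕ) := by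
  refine (Polynomial.degree_lt_iff_coeff_zero _ _).mpr fun k hk => ?_
  refine Polynomial.notMem_support_iff.mp fun hk' => ?_
  obtain ⟨m, hm, rfl⟩ := Finset.mem_image.mp (support_eq hg ▸ hk')
  exact (Finsupp.weight_two_pow_lt (hg m hm)).not_ge hk

end twoPowSubst

theorem stmt4 (n : ℕ) (b : ℕ) (hb : b = Nat.log 2 n + 2)
    (g : MvPolynomial (Fin b) (ZMod 2))
    (hml : ∀ m ∈ g.support, ∀ i : Fin b, m i ≤ 1)
    (hg : (1 + X (⟨0, by omega⟩ : Fin b)) ^ n - g ∈ Ideal.span (Set.range (gens b))) :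
    g.support.card = 2 ^ (Nat.digits 2 n).sum := by
  have hnb : n < 2 ^ b := hb ▸ (Nat.lt_pow_succ_log_self one_lt_two n).trans_le
    (Nat.pow_le_pow_right two_pos (Nat.le_succ _))
  have hdvd : Polynomial.X ^ 2 ^ b ∣ (1 + Polynomial.X) ^ n - twoPowSubst b g := by
    simpa [twoPowSubst] using twoPowSubst.X_pow_two_pow_dvd hg
  have hsubst : twoPowSubst b g = (1 + Polynomial.X) ^ n :=
    (Polynomial.eq_of_X_pow_dvd_sub (Polynomial.degree_one_add_X_pow_lt hnb)
      (twoPowSubst.degree_lt hml) hdvd).symm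
  rw [← twoPowSubst.card_support hml, hsubst, Polynomial.card_support_one_add_X_pow]
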